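/- Let 𝔸 be a Banach algebra over ℝ with unit, let A, B : [0,1] → 𝔸 be continuous, and let g : [0,1] → 𝔸 be differentiable on [0,1] (one-sidedly at the endpoints) with g(t) a unit of 𝔸 for every t ∈ [0,1]. If A(t) = g(t)⁻¹·B(t)·g(t) − g(t)⁻¹·g′(t) for all t ∈ [0,1], then Φ^A(t) = g(t)⁻¹·Φ^B(t)·g(0) for all t ∈ [0,1]. (Paper's Proposition 3.3, gauge invariance of iterated integrals, specialized to a point base.) -/

import Mathlib

/-!
Both sides solve the linear equation `Ψ' = A Ψ`, `Ψ 0 = 1` on `[0, 1]`. For `Φ^A` this is the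
integral equation `Φ^A(t) = 1 + ∫₀ᵗ A Φ^A`, obtained by integrating the series termwise. For
`g⁻¹ Φ^B g(0)` it is the product rule with `(g⁻¹)' = -g⁻¹ g' g⁻¹`, which turns `B` into exactly
the gauge transform `g⁻¹ B g - g⁻¹ g' = A`. Solutions of a linear equation with continuous
coefficient are unique (Grönwall).
-/

open MeasureTheory Set

variable {𝔸 : Type*} [NormedRing 𝔸] [NormedAlgebra ℝ 𝔸] [CompleteSpace 𝔸]

/-- Nested Chen iterated integral with accumulated product `x`:
`chenAux A n x t = ∫₀ᵗ ∫₀^{s₁} ⋯ ∫₀^{sₙ₋₁} x * A s₁ * ⋯ * A sₙ dsₙ ⋯ ds₁`. -/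
noncomputable def chenAux (A : ℝ → 𝔸) : ℕ → 𝔸 → ℝ → 𝔸
  | 0, x, _ => x
  | n + 1, x, t => ∫ s in (0:ℝ)..t, chenAux A n (x * A s) s

/-- The `n`-th Chen iterated integral
`Iₙ^A(t) = ∫₀ᵗ ∫₀^{s₁} ⋯ ∫₀^{sₙ₋₁} A(s₁) * A(s₂) * ⋯ * A(sₙ) dsₙ ⋯ ds₁`. -/
noncomputable def chenI (A : ℝ → 𝔸) (n : ℕ) (t : ℝ) : 𝔸 :=
  chenAux A n 1 t

/-- The iterated-integral series (time-ordered exponential) `Φ^A(t) = ∑ₙ Iₙ^A(t)`. -/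
noncomputable def chenPhi (A : ℝ → 𝔸) (t : ℝ) : 𝔸 :=
  ∑' n, chenI A n t

theorem ContinuousOn.exists_continuous_eqOn_Icc {α X : Type*} [LinearOrder α]
    [TopologicalSpace α] [OrderTopology α] [TopologicalSpace X] {f : α → X} {a b : α}
    (hf : ContinuousOn f (Icc a b)) (hab : a ≤ b) : ∃ F : α → X, Continuous F ∧ EqOn F f (Icc a b) :=
  ⟨IccExtend hab ((Icc a b).domRestrict f), hf.domRestrict.Icc_extend',
    fun _ hx => IccExtend_of_mem _ _ hx⟩

section

variable {R : Type*} [NormedRing R] [NormedAlgebra ℝ R]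

theorem HasDerivWithinAt.ringInverse [HasSummableGeomSeries R] {g : ℝ → R} {g' : R}
    {s : Set ℝ} {t : ℝ} (hg : HasDerivWithinAt g g' s t) (hu : IsUnit (g t)) :
    HasDerivWithinAt (fun u => Ring.inverse (g u))
      (-(Ring.inverse (g t) * g' * Ring.inverse (g t))) s t := by
  obtain ⟨w, hw⟩ := hu
  have := (hw ▸ hasFDerivAt_ringInverse (𝕜 := ℝ) w).comp_hasDerivWithinAt t hg
  exact this.congr_deriv (by simp [← hw])

theorem HasDerivWithinAt.gaugeTransform [HasSummableGeomSeries R] {Φ g : ℝ → R} {B g' : R}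
    {s : Set ℝ} {t : ℝ} (hΦ : HasDerivWithinAt Φ (B * Φ t) s t)
    (hg : HasDerivWithinAt g g' s t) (hu : IsUnit (g t)) (c : R) :
    HasDerivWithinAt (fun u => Ring.inverse (g u) * Φ u * c)
      ((Ring.inverse (g t) * B * g t - Ring.inverse (g t) * g') *
        (Ring.inverse (g t) * Φ t * c)) s t := by
  refine (((hg.ringInverse hu).mul hΦ).mul_const c).congr_deriv ?_
  symm
  calc (Ring.inverse (g t) * B * g t - Ring.inverse (g t) * g') * (Ring.inverse (g t) * Φ t * c)
      = (Ring.inverse (g t) * B * (g t * Ring.inverse (g t)) * Φ t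
          - Ring.inverse (g t) * g' * Ring.inverse (g t) * Φ t) * c := by noncomm_ring
    _ = _ := by rw [Ring.mul_inverse_cancel _ hu]; noncomm_ring

theorem eqOn_Icc_of_hasDerivWithinAt_mul_left {a Φ Ψ : ℝ → R} {t₀ T : ℝ}
    (ha : ContinuousOn a (Icc t₀ T))
    (hΦ : ContinuousOn Φ (Icc t₀ T))
    (hΦ' : ∀ t ∈ Ico t₀ T, HasDerivWithinAt Φ (a t * Φ t) (Ici t) t)
    (hΨ : ContinuousOn Ψ (Icc t₀ T))
    (hΨ' : ∀ t ∈ Ico t₀ T, HasDerivWithinAt Ψ (a t * Ψ t) (Ici t) t)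
    (h₀ : Φ t₀ = Ψ t₀) : EqOn Φ Ψ (Icc t₀ T) := by
  obtain ⟨M, hM⟩ := isCompact_Icc.exists_bound_of_continuousOn ha
  have hlip : ∀ t ∈ Ico t₀ T, LipschitzOnWith (Real.toNNReal M) (a t * ·) univ := by
    intro t ht
    refine LipschitzWith.lipschitzOnWith (LipschitzWith.of_dist_le_mul fun x y => ?_)
    rw [dist_eq_norm, dist_eq_norm, ← mul_sub]
    exact (norm_mul_le _ _).trans (mul_le_mul_of_nonneg_right
      ((hM t (Ico_subset_Icc_self ht)).trans (Real.le_coe_toNNReal M)) (norm_nonneg _))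
  exact ODE_solution_unique_of_mem_Icc_right hlip hΦ hΦ' (fun _ _ => mem_univ _)
    hΨ hΨ' (fun _ _ => mem_univ _) h₀

theorem chenAux_congr {f₁ f₂ : ℝ → R} {T : ℝ} (h : EqOn f₁ f₂ (Icc 0 T)) (n : ℕ) (x : R)
    {t : ℝ} (ht : t ∈ Icc 0 T) : chenAux f₁ n x t = chenAux f₂ n x t := by
  induction n generalizing x t with
  | zero => rfl
  | succ n ih =>
    refine intervalIntegral.integral_congr fun s hs => ?_
    rw [uIcc_of_le ht.1] at hs
    have hs' : s ∈ Icc 0 T := ⟨hs.1, hs.2.trans ht.2⟩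
    rw [h hs', ih _ hs']

theorem chenPhi_congr {f₁ f₂ : ℝ → R} {T : ℝ} (h : EqOn f₁ f₂ (Icc 0 T)) {t : ℝ}
    (ht : t ∈ Icc 0 T) : chenPhi f₁ t = chenPhi f₂ t :=
  tsum_congr fun n => chenAux_congr h n 1 ht

end

open scoped Nat

section ChenSeries

variable {f : ℝ → 𝔸}

theorem chenAux_succ_of_eq_mul {n : ℕ} (hf : Continuous f) (hc : Continuous (chenI f n))
    (hn : ∀ x s, chenAux f n x s = x * chenI f n s) (x : 𝔸) (t : ℝ) :
    chenAux f (n + 1) x t = x * ∫ s in (0:ℝ)..t, f s * chenI f n s := by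
  simp only [chenAux, hn, mul_assoc]
  exact (ContinuousLinearMap.mul ℝ 𝔸 x).intervalIntegral_comp_comm
    ((hf.mul hc).intervalIntegrable 0 t)

theorem continuous_chenI_and_chenAux_eq_mul (hf : Continuous f) (n : ℕ) :
    Continuous (chenI f n) ∧ ∀ x t, chenAux f n x t = x * chenI f n t := by
  induction n with
  | zero => exact ⟨continuous_const, fun x _ => (mul_one x).symm⟩
  | succ n ih =>
    obtain ⟨hc, hn⟩ := ih
    have hI : chenI f (n + 1) = fun t => ∫ s in (0:ℝ)..t, f s * chenI f n s := by
      funext t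
      rw [chenI, chenAux_succ_of_eq_mul hf hc hn, one_mul]
    refine ⟨hI ▸ intervalIntegral.continuous_primitive (hf.mul hc).intervalIntegrable 0,
      fun x t => ?_⟩
    rw [chenAux_succ_of_eq_mul hf hc hn, hI]

theorem continuous_chenI (hf : Continuous f) (n : ℕ) : Continuous (chenI f n) :=
  (continuous_chenI_and_chenAux_eq_mul hf n).1

theorem chenI_succ (hf : Continuous f) (n : ℕ) (t : ℝ) :
    chenI f (n + 1) t = ∫ s in (0:ℝ)..t, f s * chenI f n s := by
  rw [chenI, chenAux_succ_of_eq_mul hf (continuous_chenI hf n)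
    (continuous_chenI_and_chenAux_eq_mul hf n).2, one_mul]

theorem norm_chenI_le (hf : Continuous f) {M t : ℝ} (ht : 0 ≤ t)
    (hM : ∀ s ∈ Icc 0 t, ‖f s‖ ≤ M) (n : ℕ) :
    ‖chenI f n t‖ ≤ ‖(1 : 𝔸)‖ * ((M * t) ^ n / n !) := by
  induction n generalizing t with
  | zero => simp [chenI, chenAux]
  | succ n ih =>
    have hM₀ : 0 ≤ M := (norm_nonneg _).trans (hM 0 ⟨le_rfl, ht⟩)
    have hbound : ∀ s ∈ Ioc 0 t,
        ‖f s * chenI f n s‖ ≤ ‖(1 : 𝔸)‖ * M ^ (n + 1) / n ! * s ^ n := fun s hs => calc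
      ‖f s * chenI f n s‖ ≤ M * (‖(1 : 𝔸)‖ * ((M * s) ^ n / n !)) :=
        (norm_mul_le _ _).trans (mul_le_mul (hM s (Ioc_subset_Icc_self hs))
          (ih hs.1.le fun r hr => hM r ⟨hr.1, hr.2.trans hs.2⟩) (norm_nonneg _) hM₀)
      _ = ‖(1 : 𝔸)‖ * M ^ (n + 1) / n ! * s ^ n := by ring
    calc ‖chenI f (n + 1) t‖
        ≤ ∫ s in (0:ℝ)..t, ‖(1 : 𝔸)‖ * M ^ (n + 1) / n ! * s ^ n := by
          rw [chenI_succ hf]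
          exact intervalIntegral.norm_integral_le_of_norm_le ht (.of_forall hbound)
            ((continuous_const.mul (continuous_pow n)).intervalIntegrable 0 t)
      _ = ‖(1 : 𝔸)‖ * ((M * t) ^ (n + 1) / (n + 1)!) := by
          rw [intervalIntegral.integral_const_mul, integral_pow, Nat.factorial_succ]
          push_cast
          field_simp
          ring

theorem norm_chenI_le_of_mem_Icc (hf : Continuous f) {M T t : ℝ}
    (hM : ∀ s ∈ Icc 0 T, ‖f s‖ ≤ M) (ht : t ∈ Icc 0 T) (n : ℕ) :
    ‖chenI f n t‖ ≤ ‖(1 : 𝔸)‖ * ((M * T) ^ n / n !) := by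
  have hM₀ : 0 ≤ M := (norm_nonneg _).trans (hM t ht)
  refine (norm_chenI_le hf ht.1 (fun s hs => hM s ⟨hs.1, hs.2.trans ht.2⟩) n).trans ?_
  gcongr
  · exact mul_nonneg hM₀ ht.1
  · exact ht.2

theorem summable_chenI (hf : Continuous f) {t : ℝ} (ht : 0 ≤ t) :
    Summable (chenI f · t) := by
  obtain ⟨M, hM⟩ := isCompact_Icc.exists_bound_of_continuousOn (hf.continuousOn (s := Icc 0 t))
  exact .of_norm_bounded ((Real.summable_pow_div_factorial (M * t)).mul_left _)
    (norm_chenI_le hf ht hM)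

theorem continuousOn_chenPhi (hf : Continuous f) (T : ℝ) :
    ContinuousOn (chenPhi f) (Icc 0 T) := by
  obtain ⟨M, hM⟩ := isCompact_Icc.exists_bound_of_continuousOn (hf.continuousOn (s := Icc 0 T))
  exact continuousOn_tsum (fun n => (continuous_chenI hf n).continuousOn)
    ((Real.summable_pow_div_factorial (M * T)).mul_left _)
    (fun n t ht => norm_chenI_le_of_mem_Icc hf hM ht n)

theorem chenPhi_eq_one_add_integral (hf : Continuous f) {t : ℝ} (ht : 0 ≤ t) :
    chenPhi f t = 1 + ∫ s in (0:ℝ)..t, f s * chenPhi f s := by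
  obtain ⟨M, hM⟩ := isCompact_Icc.exists_bound_of_continuousOn (hf.continuousOn (s := Icc 0 t))
  have hM₀ : 0 ≤ M := (norm_nonneg _).trans (hM 0 ⟨le_rfl, ht⟩)
  have hsum : HasSum (fun n => chenI f (n + 1) t) (∫ s in (0:ℝ)..t, f s * chenPhi f s) := by
    simp only [chenI_succ hf]
    refine intervalIntegral.hasSum_integral_of_dominated_convergence
      (fun n _ => M * (‖(1 : 𝔸)‖ * ((M * t) ^ n / n !)))
      (fun n => (hf.mul (continuous_chenI hf n)).aestronglyMeasurable)
      (fun n => .of_forall fun s hs => ?_)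
      (.of_forall fun _ _ => ((Real.summable_pow_div_factorial (M * t)).mul_left _).mul_left M)
      intervalIntegrable_const
      (.of_forall fun s hs => ?_)
    all_goals rw [uIoc_of_le ht] at hs
    · exact (norm_mul_le _ _).trans (mul_le_mul (hM s (Ioc_subset_Icc_self hs))
        (norm_chenI_le_of_mem_Icc hf hM (Ioc_subset_Icc_self hs) n) (norm_nonneg _) hM₀)
    · exact (summable_chenI hf hs.1.le).hasSum.mul_left (f s)
  rw [chenPhi, (summable_chenI hf ht).tsum_eq_zero_add, hsum.tsum_eq]
  rfl

theorem chenPhi_zero (hf : Continuous f) : chenPhi f 0 = 1 := by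
  simp [chenPhi_eq_one_add_integral hf le_rfl]

theorem hasDerivWithinAt_chenPhi (hf : Continuous f) {t : ℝ} (ht : 0 ≤ t) :
    HasDerivWithinAt (chenPhi f) (f t * chenPhi f t) (Ici t) t := by
  have ht₁ : t ∈ Ico 0 (t + 1) := ⟨ht, lt_add_one t⟩
  have hG : ContinuousOn (fun s => f s * chenPhi f s) (Icc 0 (t + 1)) :=
    hf.continuousOn.mul (continuousOn_chenPhi hf _)
  have hint : IntervalIntegrable (fun s => f s * chenPhi f s) volume 0 t :=
    (hG.mono (Icc_subset_Icc le_rfl ht₁.2.le)).intervalIntegrable_of_Icc ht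
  have hmeas : StronglyMeasurableAtFilter (fun s => f s * chenPhi f s) (nhdsWithin t (Ioi t)) :=
    ⟨Icc 0 (t + 1), Icc_mem_nhdsGT_of_mem ht₁, hG.aestronglyMeasurable measurableSet_Icc⟩
  have hcont : ContinuousWithinAt (fun s => f s * chenPhi f s) (Ioi t) t :=
    (hG t (Ico_subset_Icc_self ht₁)).mono_of_mem_nhdsWithin (Icc_mem_nhdsGT_of_mem ht₁)
  refine ((intervalIntegral.integral_hasDerivWithinAt_right hint hmeas hcont).const_add 1)
    |>.congr_of_eventuallyEq ?_ (chenPhi_eq_one_add_integral hf ht)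
  filter_upwards [self_mem_nhdsWithin] with u hu
  exact chenPhi_eq_one_add_integral hf (ht.trans hu)

end ChenSeries

/-- gauge invariance of iterated integrals (Proposition 3.3 at a point base):
if `A = g⁻¹·B·g − g⁻¹·g'` then `Φ^A(t) = g(t)⁻¹ · Φ^B(t) · g(0)`. -/
theorem chenPhi_gauge_invariance (A B : ℝ → 𝔸)
    (hA : ContinuousOn A (Icc 0 1)) (hB : ContinuousOn B (Icc 0 1))
    (g g' : ℝ → 𝔸)
    (hg : ∀ t ∈ Icc (0:ℝ) 1, HasDerivWithinAt g (g' t) (Icc 0 1) t)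
    (hunit : ∀ t ∈ Icc (0:ℝ) 1, IsUnit (g t))
    (hgauge : ∀ t ∈ Icc (0:ℝ) 1,
      A t = Ring.inverse (g t) * B t * g t - Ring.inverse (g t) * g' t) :
    ∀ t ∈ Icc (0:ℝ) 1, chenPhi A t = Ring.inverse (g t) * chenPhi B t * g 0 := by
  -- `chenPhi` only sees the coefficient on `[0, 1]`, so `A` and `B` may be made continuous on `ℝ`.
  obtain ⟨A', hA'c, hA'⟩ := hA.exists_continuous_eqOn_Icc zero_le_one
  obtain ⟨B', hB'c, hB'⟩ := hB.exists_continuous_eqOn_Icc zero_le_one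
  have hginv : ContinuousOn (fun u => Ring.inverse (g u)) (Icc 0 1) := fun t ht =>
    ((hg t ht).ringInverse (hunit t ht)).continuousWithinAt
  have hsol :
      EqOn (chenPhi A') (fun u => Ring.inverse (g u) * chenPhi B' u * g 0) (Icc 0 1) := by
    refine eqOn_Icc_of_hasDerivWithinAt_mul_left hA'c.continuousOn (continuousOn_chenPhi hA'c 1)
      (fun t ht => hasDerivWithinAt_chenPhi hA'c ht.1)
      ((hginv.mul (continuousOn_chenPhi hB'c 1)).mul continuousOn_const) (fun t ht => ?_) ?_
    · have ht' : t ∈ Icc (0:ℝ) 1 := Ico_subset_Icc_self ht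
      rw [hA' ht', hgauge t ht', ← hB' ht']
      exact (hasDerivWithinAt_chenPhi hB'c ht.1).gaugeTransform
        ((hg t ht').mono_of_mem_nhdsWithin (Icc_mem_nhdsGE_of_mem ht)) (hunit t ht') (g 0)
    · simp [chenPhi_zero hA'c, chenPhi_zero hB'c,
        Ring.inverse_mul_cancel _ (hunit 0 ⟨le_rfl, zero_le_one⟩)]
  intro t ht
  rw [← chenPhi_congr hA' ht, ← chenPhi_congr hB' ht, hsol ht]
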